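/- Consider the dtMJLS x(k+1) = A_{σ(k)} x(k) + B u(k) with (σ(k)) i.i.d. with distribution π, and the cost J = E[Σ_{k=0}^{N−1} (x(k)'Mx(k) + u(k)'Ru(k)) + x(N)'Qx(N)] over causal (state-feedback) policies u(k) = g_k(x(0),…,x(k)). Then the optimal cost from initial state x(0) = x₀ is x₀' P(0) x₀, where P(·) satisfies the backward Riccati-type recursion P(N)=Q, P(k) = M + Σ_i π_i A_i'P(k+1)A_i − Ā'P(k+1)B(R+B'P(k+1)B)⁻¹B'P(k+1)Ā, and an optimal policy is the linear feedback u(k) = K(k)x(k) with K(k) = −(R + B'P(k+1)B)⁻¹ B' P(k+1) Ā. -/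

import Mathlib

/-!
Dynamic programming by completing the square. The mode `σ(k)` is independent of the history up to
time `k`, so averaging the cost-to-go `x(k+1)ᵀ P(k+1) x(k+1)` over `σ(k)` keeps `x(k)` and `u(k)`
fixed, and only the cross term between `A_{σ(k)} x(k)` and `B u(k)` sees the modes, through their
mean `Ā`. Completing the square in `u(k)` then gives, along every history,
`xᵀMx + uᵀRu + E[x(k+1)ᵀ P(k+1) x(k+1)] = xᵀ P(k) x + (u - K(k) x)ᵀ S(k) (u - K(k) x)`
with `S(k) = R + Bᵀ P(k+1) B`. Taking expectations and telescoping, the expected cost of any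
causal policy is `x₀ᵀ P(0) x₀` plus the expected penalties `(u - K x)ᵀ S (u - K x)`: these vanish
for the linear feedback, and are nonnegative in general because the recursion keeps `P(k)`
positive semidefinite, hence `S(k)` positive definite.
-/

open Matrix

/-- The (random) state trajectory of the jump linear system
`x(k+1) = A_{σ(k)} x(k) + B u(k)` under a causal state-feedback policy `g`
(at time `k`, `g k` is applied to the state history `x(0),…,x(k)`);
`trajs A B g x0 ω k` is the history `(x(0),…,x(k))` for the noise realization `ω`. -/
noncomputable def trajs {n m q : ℕ} (A : Fin q → Matrix (Fin n) (Fin n) ℝ)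
    (B : Matrix (Fin n) (Fin m) ℝ)
    (g : (k : ℕ) → (Fin (k + 1) → (Fin n → ℝ)) → (Fin m → ℝ))
    (x0 : Fin n → ℝ) (ω : ℕ → Fin q) : (k : ℕ) → Fin (k + 1) → (Fin n → ℝ)
  | 0 => fun _ => x0
  | k + 1 => Fin.snoc (trajs A B g x0 ω k)
      (A (ω k) *ᵥ (trajs A B g x0 ω k (Fin.last k)) + B *ᵥ g k (trajs A B g x0 ω k))

/-- Expected finite-horizon LQR cost
`E[Σ_{k=0}^{N−1} (x(k)'Mx(k) + u(k)'Ru(k)) + x(N)'Qx(N)]` of the policy `g`,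
the expectation taken over the i.i.d. sequence `σ(0),…,σ(N−1)` with distribution `π`. -/
noncomputable def expCost {n m q : ℕ} [NeZero q]
    (A : Fin q → Matrix (Fin n) (Fin n) ℝ) (B : Matrix (Fin n) (Fin m) ℝ)
    (M Q : Matrix (Fin n) (Fin n) ℝ) (R : Matrix (Fin m) (Fin m) ℝ)
    (π : Fin q → ℝ) (N : ℕ) (x0 : Fin n → ℝ)
    (g : (k : ℕ) → (Fin (k + 1) → (Fin n → ℝ)) → (Fin m → ℝ)) : ℝ :=
  ∑ ω : Fin N → Fin q, (∏ k, π (ω k)) *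
    (let ωe : ℕ → Fin q := fun k => if h : k < N then ω ⟨k, h⟩ else default
     (∑ k ∈ Finset.range N,
        ((trajs A B g x0 ωe k (Fin.last k)) ⬝ᵥ (M *ᵥ (trajs A B g x0 ωe k (Fin.last k))) +
         (g k (trajs A B g x0 ωe k)) ⬝ᵥ (R *ᵥ (g k (trajs A B g x0 ωe k))))) +
     (trajs A B g x0 ωe N (Fin.last N)) ⬝ᵥ (Q *ᵥ (trajs A B g x0 ωe N (Fin.last N))))

section PathExpectation

variable {σ : Type*} [Inhabited σ]

def extendPath (N : ℕ) (ω : Fin N → σ) : ℕ → σ :=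
  fun k => if h : k < N then ω ⟨k, h⟩ else default

theorem extendPath_snoc (N : ℕ) (ω : Fin N → σ) (i : σ) :
    extendPath (N + 1) (Fin.snoc ω i) = Function.update (extendPath N ω) N i := by
  ext k
  rcases lt_trichotomy k N with hk | rfl | hk
  · simp [extendPath, Function.update_of_ne hk.ne, hk, Nat.lt_succ_of_lt hk, Fin.snoc]
  · simp [extendPath, Fin.snoc]
  · simp [extendPath, Function.update_of_ne hk.ne', hk.not_gt, (Nat.succ_le_of_lt hk).not_gt]

variable [Fintype σ]

/-- The expectation of `f` over i.i.d. modes `σ(0), …, σ(N-1)` with law `π`; the modes from time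
`N` on are read as `default`, as in `expCost`. -/
noncomputable def pathExpect (π : σ → ℝ) (N : ℕ) (f : (ℕ → σ) → ℝ) : ℝ :=
  ∑ ω : Fin N → σ, (∏ k, π (ω k)) * f (extendPath N ω)

theorem pathExpect_succ (π : σ → ℝ) (N : ℕ) (f : (ℕ → σ) → ℝ) :
    pathExpect π (N + 1) f =
      pathExpect π N fun ω => ∑ i, π i * f (Function.update ω N i) := by
  rw [pathExpect, ← (Fin.snocEquiv fun _ => σ).sum_comp, Fintype.sum_prod_type, Finset.sum_comm]
  refine Finset.sum_congr rfl fun ω _ => ?_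
  rw [Finset.mul_sum]
  refine Finset.sum_congr rfl fun i _ => ?_
  have : Fin.snocEquiv (fun _ => σ) (i, ω) = Fin.snoc ω i := rfl
  rw [this, Fin.prod_univ_castSucc, extendPath_snoc]
  simp only [Fin.snoc_castSucc, Fin.snoc_last]
  ring

theorem pathExpect_add (π : σ → ℝ) (N : ℕ) (f h : (ℕ → σ) → ℝ) :
    pathExpect π N (fun ω => f ω + h ω) = pathExpect π N f + pathExpect π N h := by
  simp only [pathExpect, mul_add, Finset.sum_add_distrib]

theorem pathExpect_nonneg {π : σ → ℝ} (hπ : ∀ i, 0 ≤ π i) (N : ℕ) {f : (ℕ → σ) → ℝ}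
    (hf : ∀ ω, 0 ≤ f ω) : 0 ≤ pathExpect π N f :=
  Finset.sum_nonneg fun _ _ => mul_nonneg (Finset.prod_nonneg fun _ _ => hπ _) (hf _)

end PathExpectation

section Riccati

variable {ι α β γ : Type*} [Fintype ι] [Fintype α] [Fintype β] [Fintype γ]

theorem Matrix.IsSymm.dotProduct_mulVec_comm {S : Matrix β β ℝ} (hS : S.IsSymm) (u v : β → ℝ) :
    u ⬝ᵥ (S *ᵥ v) = v ⬝ᵥ (S *ᵥ u) := by
  rw [← dotProduct_transpose_mulVec, hS.eq]

theorem Matrix.PosSemidef.dotProduct_mulVec_self_nonneg {S : Matrix β β ℝ} (hS : S.PosSemidef)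
    (x : β → ℝ) : 0 ≤ x ⬝ᵥ (S *ᵥ x) := by
  simpa only [star_trivial] using hS.dotProduct_mulVec_nonneg x

theorem mulVec_dotProduct_mulVec_mulVec (E : Matrix α β ℝ) (P : Matrix α α ℝ) (F : Matrix α γ ℝ)
    (x : β → ℝ) (y : γ → ℝ) : (E *ᵥ x) ⬝ᵥ (P *ᵥ (F *ᵥ y)) = x ⬝ᵥ ((Eᵀ * P * F) *ᵥ y) := by
  rw [← mulVec_mulVec, ← mulVec_mulVec, dotProduct_transpose_mulVec, dotProduct_comm]

theorem dotProduct_sum_smul_mulVec (π : ι → ℝ) (E : ι → Matrix α β ℝ) (x : α → ℝ) (y : β → ℝ) :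
    x ⬝ᵥ ((∑ i, π i • E i) *ᵥ y) = ∑ i, π i * (x ⬝ᵥ (E i *ᵥ y)) := by
  simp only [sum_mulVec, dotProduct_sum, smul_mulVec, dotProduct_smul, smul_eq_mul]

theorem dotProduct_mulVec_add_inv_mul_mulVec [DecidableEq β] {S : Matrix β β ℝ} (hS : S.IsSymm)
    (hdet : IsUnit S.det) (C : Matrix β α ℝ) (u : β → ℝ) (x : α → ℝ) :
    (u + (S⁻¹ * C) *ᵥ x) ⬝ᵥ (S *ᵥ (u + (S⁻¹ * C) *ᵥ x)) =
      u ⬝ᵥ (S *ᵥ u) + 2 * (u ⬝ᵥ (C *ᵥ x)) + x ⬝ᵥ ((Cᵀ * S⁻¹ * C) *ᵥ x) := by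
  have hSC : S *ᵥ ((S⁻¹ * C) *ᵥ x) = C *ᵥ x := by
    rw [mulVec_mulVec, mul_nonsing_inv_cancel_left _ _ hdet]
  have hcross : ((S⁻¹ * C) *ᵥ x) ⬝ᵥ (S *ᵥ u) = u ⬝ᵥ (C *ᵥ x) := by
    rw [hS.dotProduct_mulVec_comm, hSC]
  have hsquare : ((S⁻¹ * C) *ᵥ x) ⬝ᵥ (C *ᵥ x) = x ⬝ᵥ ((Cᵀ * S⁻¹ * C) *ᵥ x) := by
    rw [Matrix.mul_assoc, ← mulVec_mulVec x Cᵀ, dotProduct_transpose_mulVec]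
  rw [mulVec_add, hSC, add_dotProduct, dotProduct_add, dotProduct_add, hcross, hsquare]
  ring

theorem sum_mul_dotProduct_mulVec_affine (π : ι → ℝ) (hπ : ∑ i, π i = 1) (A : ι → Matrix α α ℝ)
    (B : Matrix α β ℝ) {P : Matrix α α ℝ} (hP : P.IsSymm) (x : α → ℝ) (u : β → ℝ) :
    ∑ i, π i * ((A i *ᵥ x + B *ᵥ u) ⬝ᵥ (P *ᵥ (A i *ᵥ x + B *ᵥ u))) =
      x ⬝ᵥ ((∑ i, π i • ((A i)ᵀ * P * A i)) *ᵥ x) +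
        2 * (u ⬝ᵥ ((Bᵀ * P * ∑ i, π i • A i) *ᵥ x)) + u ⬝ᵥ ((Bᵀ * P * B) *ᵥ u) := by
  have expand : ∀ i, (A i *ᵥ x + B *ᵥ u) ⬝ᵥ (P *ᵥ (A i *ᵥ x + B *ᵥ u)) =
      x ⬝ᵥ (((A i)ᵀ * P * A i) *ᵥ x) + 2 * (u ⬝ᵥ ((Bᵀ * P * A i) *ᵥ x)) +
        u ⬝ᵥ ((Bᵀ * P * B) *ᵥ u) := by
    intro i
    rw [mulVec_add, add_dotProduct, dotProduct_add, dotProduct_add,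
      hP.dotProduct_mulVec_comm (A i *ᵥ x) (B *ᵥ u)]
    simp only [mulVec_dotProduct_mulVec_mulVec]
    ring
  simp only [Matrix.mul_sum, Matrix.mul_smul]
  rw [dotProduct_sum_smul_mulVec, dotProduct_sum_smul_mulVec]
  simp only [expand, mul_add, Finset.sum_add_distrib, ← Finset.sum_mul, hπ, one_mul,
    Finset.mul_sum, mul_left_comm (π _)]

omit [Fintype β] in
theorem isSymm_add_transpose_mul_mul {R : Matrix β β ℝ} {P : Matrix α α ℝ} (hR : R.IsSymm)
    (hP : P.IsSymm) (B : Matrix α β ℝ) : (R + Bᵀ * P * B).IsSymm := by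
  simp only [IsSymm, transpose_add, transpose_mul, transpose_transpose, hR.eq, hP.eq,
    Matrix.mul_assoc]

theorem posDef_add_transpose_mul_mul {R : Matrix β β ℝ} {P : Matrix α α ℝ} (hR : R.PosDef)
    (hP : P.PosSemidef) (B : Matrix α β ℝ) : (R + Bᵀ * P * B).PosDef :=
  hR.add_posSemidef (hP.conjTranspose_mul_mul_same B)

variable [DecidableEq β]

noncomputable def riccatiGain (π : ι → ℝ) (A : ι → Matrix α α ℝ) (B : Matrix α β ℝ)
    (R : Matrix β β ℝ) (P : Matrix α α ℝ) : Matrix β α ℝ :=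
  (R + Bᵀ * P * B)⁻¹ * Bᵀ * P * (∑ i, π i • A i)

noncomputable def riccatiStep (π : ι → ℝ) (A : ι → Matrix α α ℝ) (B : Matrix α β ℝ)
    (M : Matrix α α ℝ) (R : Matrix β β ℝ) (P : Matrix α α ℝ) : Matrix α α ℝ :=
  M + (∑ i, π i • ((A i)ᵀ * P * A i)) -
    (∑ i, π i • A i)ᵀ * P * B * (R + Bᵀ * P * B)⁻¹ * Bᵀ * P * (∑ i, π i • A i)

theorem riccatiStep_isSymm (π : ι → ℝ) (A : ι → Matrix α α ℝ) (B : Matrix α β ℝ)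
    {M : Matrix α α ℝ} {R : Matrix β β ℝ} {P : Matrix α α ℝ} (hM : M.IsSymm) (hR : R.IsSymm)
    (hP : P.IsSymm) : (riccatiStep π A B M R P).IsSymm := by
  unfold riccatiStep
  -- hide the inverse from `simp`, whose reassociation inside it would break the match with `hSinv`
  have hSinv := (isSymm_add_transpose_mul_mul hR hP B).inv
  generalize (R + Bᵀ * P * B)⁻¹ = T at hSinv ⊢
  simp only [IsSymm, transpose_sub, transpose_add, transpose_sum, transpose_smul,
    transpose_mul, transpose_transpose, hM.eq, hP.eq, hSinv.eq, Matrix.mul_assoc]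

theorem riccati_complete_square (π : ι → ℝ) (hπ : ∑ i, π i = 1) (A : ι → Matrix α α ℝ)
    (B : Matrix α β ℝ) (M : Matrix α α ℝ) {R : Matrix β β ℝ} {P : Matrix α α ℝ}
    (hR : R.IsSymm) (hP : P.IsSymm) (hdet : IsUnit (R + Bᵀ * P * B).det)
    (x : α → ℝ) (u : β → ℝ) :
    x ⬝ᵥ (M *ᵥ x) + u ⬝ᵥ (R *ᵥ u) +
        ∑ i, π i * ((A i *ᵥ x + B *ᵥ u) ⬝ᵥ (P *ᵥ (A i *ᵥ x + B *ᵥ u))) =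
      x ⬝ᵥ (riccatiStep π A B M R P *ᵥ x) +
        (u + riccatiGain π A B R P *ᵥ x) ⬝ᵥ
          ((R + Bᵀ * P * B) *ᵥ (u + riccatiGain π A B R P *ᵥ x)) := by
  set S := R + Bᵀ * P * B
  set C := Bᵀ * P * ∑ i, π i • A i
  have hgain : riccatiGain π A B R P = S⁻¹ * C := by
    simp only [riccatiGain, C, S, Matrix.mul_assoc]
  have hstep : riccatiStep π A B M R P = M + (∑ i, π i • ((A i)ᵀ * P * A i)) - Cᵀ * S⁻¹ * C := by
    simp only [riccatiStep, C, S, transpose_mul, transpose_transpose, hP.eq, Matrix.mul_assoc]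
  rw [hgain, dotProduct_mulVec_add_inv_mul_mulVec (isSymm_add_transpose_mul_mul hR hP B) hdet,
    sum_mul_dotProduct_mulVec_affine π hπ A B hP, hstep]
  simp only [S, add_mulVec, sub_mulVec, dotProduct_add, dotProduct_sub]
  ring

theorem riccatiStep_posSemidef {π : ι → ℝ} (hπ₀ : ∀ i, 0 ≤ π i) (hπ : ∑ i, π i = 1)
    (A : ι → Matrix α α ℝ) (B : Matrix α β ℝ) {M : Matrix α α ℝ} {R : Matrix β β ℝ}
    {P : Matrix α α ℝ} (hM : M.PosSemidef) (hR : R.PosDef) (hP : P.PosSemidef) :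
    (riccatiStep π A B M R P).PosSemidef := by
  have hMs : M.IsSymm := isHermitian_iff_isSymm.mp hM.isHermitian
  have hRs : R.IsSymm := isHermitian_iff_isSymm.mp hR.isHermitian
  have hPs : P.IsSymm := isHermitian_iff_isSymm.mp hP.isHermitian
  have hdet : IsUnit (R + Bᵀ * P * B).det :=
    (isUnit_iff_isUnit_det _).mp (posDef_add_transpose_mul_mul hR hP B).isUnit
  refine .of_dotProduct_mulVec_nonneg
    (isHermitian_iff_isSymm.mpr (riccatiStep_isSymm π A B hMs hRs hPs)) fun x => ?_
  -- at the optimal control `u = -riccatiGain x` the penalty vanishes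
  have key := riccati_complete_square π hπ A B M hRs hPs hdet x (-(riccatiGain π A B R P *ᵥ x))
  rw [neg_add_cancel, zero_dotProduct, add_zero] at key
  rw [star_trivial, ← key]
  exact add_nonneg (add_nonneg (hM.dotProduct_mulVec_self_nonneg x)
    (hR.posSemidef.dotProduct_mulVec_self_nonneg _))
    (Finset.sum_nonneg fun i _ => mul_nonneg (hπ₀ i) (hP.dotProduct_mulVec_self_nonneg _))

theorem posSemidef_of_eq_riccatiStep {π : ι → ℝ} (hπ₀ : ∀ i, 0 ≤ π i) (hπ : ∑ i, π i = 1)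
    (A : ι → Matrix α α ℝ) (B : Matrix α β ℝ) {M : Matrix α α ℝ} {R : Matrix β β ℝ}
    (hM : M.PosSemidef) (hR : R.PosDef) {Pm : ℕ → Matrix α α ℝ} {N : ℕ}
    (hN : (Pm N).PosSemidef) (hrec : ∀ k < N, Pm k = riccatiStep π A B M R (Pm (k + 1)))
    {k : ℕ} (hk : k ≤ N) : (Pm k).PosSemidef :=
  Nat.decreasingInduction (motive := fun k _ => (Pm k).PosSemidef)
    (fun k hk ih => hrec k hk ▸ riccatiStep_posSemidef hπ₀ hπ A B hM hR ih) hN hk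

end Riccati

section JumpLinearSystem

variable {n m q : ℕ} (A : Fin q → Matrix (Fin n) (Fin n) ℝ) (B : Matrix (Fin n) (Fin m) ℝ)
  (g : (k : ℕ) → (Fin (k + 1) → (Fin n → ℝ)) → (Fin m → ℝ)) (x0 : Fin n → ℝ)

theorem trajs_congr {ω ω' : ℕ → Fin q} :
    ∀ {k : ℕ}, (∀ j < k, ω j = ω' j) → trajs A B g x0 ω k = trajs A B g x0 ω' k
  | 0, _ => rfl
  | k + 1, h => by
    simp only [trajs, trajs_congr fun j hj => h j (Nat.lt_succ_of_lt hj), h k (Nat.lt_succ_self k)]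

theorem trajs_succ_last (ω : ℕ → Fin q) (k : ℕ) :
    trajs A B g x0 ω (k + 1) (Fin.last (k + 1)) =
      A (ω k) *ᵥ trajs A B g x0 ω k (Fin.last k) + B *ᵥ g k (trajs A B g x0 ω k) := by
  simp only [trajs, Fin.snoc_last]

variable (M : Matrix (Fin n) (Fin n) ℝ) (R : Matrix (Fin m) (Fin m) ℝ)

noncomputable def stageCost (ω : ℕ → Fin q) (k : ℕ) : ℝ :=
  trajs A B g x0 ω k (Fin.last k) ⬝ᵥ (M *ᵥ trajs A B g x0 ω k (Fin.last k)) +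
    g k (trajs A B g x0 ω k) ⬝ᵥ (R *ᵥ g k (trajs A B g x0 ω k))

noncomputable def pathCost (P : Matrix (Fin n) (Fin n) ℝ) (N : ℕ) (ω : ℕ → Fin q) : ℝ :=
  ∑ k ∈ Finset.range N, stageCost A B g x0 M R ω k +
    trajs A B g x0 ω N (Fin.last N) ⬝ᵥ (P *ᵥ trajs A B g x0 ω N (Fin.last N))

theorem expCost_eq_pathExpect [NeZero q] (Q : Matrix (Fin n) (Fin n) ℝ) (π : Fin q → ℝ) (N : ℕ) :
    expCost A B M Q R π N x0 g = pathExpect π N (pathCost A B g x0 M R Q N) :=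
  rfl

noncomputable def feedbackDeviation (π : Fin q → ℝ) (P : Matrix (Fin n) (Fin n) ℝ) (k : ℕ)
    (ω : ℕ → Fin q) : ℝ :=
  let v := g k (trajs A B g x0 ω k) + riccatiGain π A B R P *ᵥ trajs A B g x0 ω k (Fin.last k)
  v ⬝ᵥ ((R + Bᵀ * P * B) *ᵥ v)

theorem pathCost_succ_update (P : Matrix (Fin n) (Fin n) ℝ) (N : ℕ) (ω : ℕ → Fin q) (i : Fin q) :
    pathCost A B g x0 M R P (N + 1) (Function.update ω N i) =
      ∑ k ∈ Finset.range N, stageCost A B g x0 M R ω k + (stageCost A B g x0 M R ω N +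
        (A i *ᵥ trajs A B g x0 ω N (Fin.last N) + B *ᵥ g N (trajs A B g x0 ω N)) ⬝ᵥ
          (P *ᵥ (A i *ᵥ trajs A B g x0 ω N (Fin.last N) + B *ᵥ g N (trajs A B g x0 ω N)))) := by
  have hagree : ∀ k ≤ N, trajs A B g x0 (Function.update ω N i) k = trajs A B g x0 ω k :=
    fun k hk => trajs_congr A B g x0 fun j hj => Function.update_of_ne (by omega) _ _
  have hstage : ∀ k ≤ N, stageCost A B g x0 M R (Function.update ω N i) k =
      stageCost A B g x0 M R ω k := fun k hk => by simp only [stageCost, hagree k hk]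
  rw [pathCost, Finset.sum_range_succ, trajs_succ_last, Function.update_self, hagree N le_rfl,
    hstage N le_rfl, add_assoc,
    Finset.sum_congr rfl fun k hk => hstage k (Finset.mem_range.mp hk).le]

theorem sum_pathCost_update {π : Fin q → ℝ} (hπ : ∑ i, π i = 1) {P : Matrix (Fin n) (Fin n) ℝ}
    (hR : R.IsSymm) (hP : P.IsSymm) (hdet : IsUnit (R + Bᵀ * P * B).det) (N : ℕ) (ω : ℕ → Fin q) :
    ∑ i, π i * pathCost A B g x0 M R P (N + 1) (Function.update ω N i) =
      pathCost A B g x0 M R (riccatiStep π A B M R P) N ω +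
        feedbackDeviation A B g x0 R π P N ω := by
  simp only [pathCost_succ_update, mul_add, Finset.sum_add_distrib, ← Finset.sum_mul, hπ,
    one_mul]
  rw [stageCost, riccati_complete_square π hπ A B M hR hP hdet, pathCost,
    feedbackDeviation]
  ring

theorem expCost_eq_add_sum_feedbackDeviation [NeZero q] {π : Fin q → ℝ} (hπ : ∑ i, π i = 1)
    (hR : R.IsSymm) (Pm : ℕ → Matrix (Fin n) (Fin n) ℝ) :
    ∀ N : ℕ, (∀ k < N, (Pm (k + 1)).IsSymm) → (∀ k < N, IsUnit (R + Bᵀ * Pm (k + 1) * B).det) →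
      (∀ k < N, Pm k = riccatiStep π A B M R (Pm (k + 1))) →
      expCost A B M (Pm N) R π N x0 g = x0 ⬝ᵥ (Pm 0 *ᵥ x0) +
        ∑ k ∈ Finset.range N, pathExpect π k (feedbackDeviation A B g x0 R π (Pm (k + 1)) k)
  | 0, _, _, _ => by simp [expCost_eq_pathExpect, pathExpect, pathCost, trajs]
  | N + 1, hP, hdet, hrec => by
    have ih := expCost_eq_add_sum_feedbackDeviation hπ hR Pm N (fun k hk => hP k (by omega))
      (fun k hk => hdet k (by omega)) (fun k hk => hrec k (by omega))
    simp only [expCost_eq_pathExpect, pathExpect_succ,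
      sum_pathCost_update A B g x0 M R hπ hR (hP N N.lt_succ_self) (hdet N N.lt_succ_self),
      ← hrec N N.lt_succ_self, pathExpect_add] at ih ⊢
    rw [ih, Finset.sum_range_succ, add_assoc]

end JumpLinearSystem

/-- Finite-horizon LQR for the dtMJLS with unmeasurable i.i.d. mode: the optimal
expected cost from `x(0) = x₀` over all causal state-feedback policies is
`x₀' P(0) x₀`, where `P(·)` satisfies the backward Riccati-type recursion, and the
linear feedback `u(k) = K(k) x(k)`, `K(k) = −(R+B'P(k+1)B)⁻¹ B'P(k+1)Ā`, is optimal. -/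
theorem stmt8 {n m q : ℕ} [NeZero q]
    (π : Fin q → ℝ) (hπ : ∀ i, 0 ≤ π i) (hsum : ∑ i, π i = 1)
    (A : Fin q → Matrix (Fin n) (Fin n) ℝ) (B : Matrix (Fin n) (Fin m) ℝ)
    (M Q : Matrix (Fin n) (Fin n) ℝ) (R : Matrix (Fin m) (Fin m) ℝ)
    (hM : M.PosSemidef) (hQ : Q.PosSemidef) (hR : R.PosDef)
    (N : ℕ) (x0 : Fin n → ℝ)
    (Pm : ℕ → Matrix (Fin n) (Fin n) ℝ) (hPN : Pm N = Q)
    (hrec : ∀ k, k < N → Pm k = M + (∑ i, π i • ((A i)ᵀ * Pm (k+1) * A i)) -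
      (∑ i, π i • A i)ᵀ * Pm (k+1) * B * (R + Bᵀ * Pm (k+1) * B)⁻¹ *
        Bᵀ * Pm (k+1) * (∑ i, π i • A i))
    (K : ℕ → Matrix (Fin m) (Fin n) ℝ)
    (hK : ∀ k, K k = -((R + Bᵀ * Pm (k+1) * B)⁻¹ * Bᵀ * Pm (k+1) * (∑ i, π i • A i))) :
    expCost A B M Q R π N x0 (fun k h => K k *ᵥ h (Fin.last k)) = x0 ⬝ᵥ (Pm 0 *ᵥ x0) ∧
    ∀ g : (k : ℕ) → (Fin (k + 1) → (Fin n → ℝ)) → (Fin m → ℝ),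
      x0 ⬝ᵥ (Pm 0 *ᵥ x0) ≤ expCost A B M Q R π N x0 g := by
  have hPsd : ∀ k ≤ N, (Pm k).PosSemidef := fun k hk =>
    posSemidef_of_eq_riccatiStep hπ hsum A B hM hR (hPN ▸ hQ) hrec hk
  have hS : ∀ k < N, (R + Bᵀ * Pm (k + 1) * B).PosDef := fun k hk =>
    posDef_add_transpose_mul_mul hR (hPsd (k + 1) hk) B
  have hcost g := expCost_eq_add_sum_feedbackDeviation A B g x0 M R hsum
    (isHermitian_iff_isSymm.mp hR.isHermitian) Pm N
    (fun k hk => isHermitian_iff_isSymm.mp (hPsd (k + 1) hk).isHermitian)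
    (fun k hk => (isUnit_iff_isUnit_det _).mp (hS k hk).isUnit) hrec
  rw [hPN] at hcost
  refine ⟨?_, fun g => ?_⟩
  · have hzero : ∀ k ω, feedbackDeviation A B (fun k h => K k *ᵥ h (Fin.last k)) x0 R π
        (Pm (k + 1)) k ω = 0 := by
      intro k ω
      simp only [feedbackDeviation, hK k, riccatiGain, neg_mulVec, neg_add_cancel, zero_dotProduct]
    simp [hcost, hzero, pathExpect]
  · rw [hcost g]
    exact le_add_of_nonneg_right <| Finset.sum_nonneg fun k hk => pathExpect_nonneg hπ k fun _ =>
      (hS k (Finset.mem_range.mp hk)).posSemidef.dotProduct_mulVec_self_nonneg _
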